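/- Let M be a right A-module with a hom-connection ∇ with respect to the universal differential calculus. Then for all a, b ∈ A and m ∈ M, the following equality of right A-linear maps Ω¹A → M holds: ∇₁(φ_{m,a,b}) = φ_{∇(φ_{m,b}), a} + φ_{m b, a} + φ_{m a, b} − φ_{m, a b}. -/

import Mathlib

/-!
We compare both sides at a one-form `ω = Σ xᵢ ⊗ yᵢ`, where
`∇₁(φ_{m,a,b})(ω) = ∇(φ_{m,a,b}·ω) + φ_{m,a,b}(dω)`. The contraction `φ_{m,a,b}·ω` is `φ_{n,b}`
with `n = Σ m xᵢ a yᵢ`, and since `φ_{m c, b} = φ_{m,b}·c`, the hom-connection rule gives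
`∇(φ_{m c, b}) = ∇(φ_{m,b}) c + m b c − m c b`; summed over the terms of `n` this is
`φ_{∇(φ_{m,b}),a}(ω) + φ_{m b,a}(ω) − n b`. Expanding `dω` gives
`φ_{m a,b}(ω) − φ_{m,a b}(ω) + n b`, and the two `n b` terms cancel.
-/

open TensorProduct MulOpposite

variable (K A M : Type*) [Field K] [Ring A] [Algebra K A]
  [AddCommGroup M] [Module K M] [Module Aᵐᵒᵖ M] [IsScalarTower K Aᵐᵒᵖ M]

/-- The space `Ω¹A = ker(μ : A ⊗ A → A)` of universal one-forms. -/
noncomputable def Omega1 : Submodule K (A ⊗[K] A) := LinearMap.ker (LinearMap.mul' K A)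

lemma mul'_lTensor_mulRight (b : A) (x : A ⊗[K] A) :
    LinearMap.mul' K A (LinearMap.lTensor A (LinearMap.mulRight K b) x)
      = LinearMap.mul' K A x * b := by
  induction x using TensorProduct.induction_on with
  | zero => simp
  | tmul x y => simp [mul_assoc]
  | add u v hu hv => simp [hu, hv, add_mul]

lemma mul'_rTensor_mulLeft (a : A) (x : A ⊗[K] A) :
    LinearMap.mul' K A (LinearMap.rTensor A (LinearMap.mulLeft K a) x)
      = a * LinearMap.mul' K A x := by
  induction x using TensorProduct.induction_on with
  | zero => simp
  | tmul x y => simp [mul_assoc]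
  | add u v hu hv => simp [hu, hv, mul_add]

/-- Right `A`-action on `Ω¹A`: multiplication of the second tensor factor. -/
noncomputable def omegaR (b : A) : Omega1 K A →ₗ[K] Omega1 K A :=
  (LinearMap.lTensor A (LinearMap.mulRight K b)).restrict (fun x hx => by
    simp only [Omega1, LinearMap.mem_ker] at hx ⊢
    rw [mul'_lTensor_mulRight, hx, zero_mul])

/-- Left `A`-action on `Ω¹A`: multiplication of the first tensor factor. -/
noncomputable def omegaL (a : A) : Omega1 K A →ₗ[K] Omega1 K A :=
  (LinearMap.rTensor A (LinearMap.mulLeft K a)).restrict (fun x hx => by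
    simp only [Omega1, LinearMap.mem_ker] at hx ⊢
    rw [mul'_rTensor_mulLeft, hx, mul_zero])

/-- The space `Hom_A(Ω¹A, M)` of right `A`-linear maps `Ω¹A → M`. -/
noncomputable def rHom : Submodule K (↥(Omega1 K A) →ₗ[K] M) where
  carrier := {f | ∀ (b : A) (ω : Omega1 K A), f (omegaR K A b ω) = op b • f ω}
  add_mem' := by intro f g hf hg b ω; simp [hf b ω, hg b ω, smul_add]
  zero_mem' := by intro b ω; simp
  smul_mem' := by
    intro c f hf b ω
    simp only [LinearMap.smul_apply, hf b ω]
    rw [smul_comm]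

/-- The universal differential `d a = 1 ⊗ a − a ⊗ 1 ∈ Ω¹A`. -/
noncomputable def dEl (a : A) : Omega1 K A :=
  ⟨(1 : A) ⊗ₜ[K] a - a ⊗ₜ[K] (1 : A), by
    simp [Omega1, LinearMap.mem_ker]⟩

lemma omegaL_omegaR_comm (a b : A) (ω : Omega1 K A) :
    omegaL K A a (omegaR K A b ω) = omegaR K A b (omegaL K A a ω) := by
  apply Subtype.ext
  show (LinearMap.rTensor A (LinearMap.mulLeft K a))
      ((LinearMap.lTensor A (LinearMap.mulRight K b)) ω.1)
    = (LinearMap.lTensor A (LinearMap.mulRight K b))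
      ((LinearMap.rTensor A (LinearMap.mulLeft K a)) ω.1)
  rw [← LinearMap.comp_apply, ← LinearMap.comp_apply, LinearMap.rTensor_comp_lTensor,
    LinearMap.lTensor_comp_rTensor]

/-- The right `A`-action on `Hom_A(Ω¹A, M)`: `(f·a)(ω) := f(a·ω)`. -/
noncomputable def fDot (f : rHom K A M) (a : A) : rHom K A M :=
  ⟨(f : ↥(Omega1 K A) →ₗ[K] M).comp (omegaL K A a), by
    intro b ω
    simp only [LinearMap.comp_apply, omegaL_omegaR_comm]
    exact f.2 b (omegaL K A a ω)⟩

/-- `D : Hom_A(Ω¹A, M) → M` is a hom-connection with respect to the universal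
differential calculus: `D(f·a) = D(f) a + f(da)`. -/
def IsHomConnection (D : ↥(rHom K A M) →ₗ[K] M) : Prop :=
  ∀ (f : rHom K A M) (a : A),
    D (fDot K A M f a) = op a • D f + (f : ↥(Omega1 K A) →ₗ[K] M) (dEl K A a)

/-- The map `A ⊗ A → M`, `x ⊗ y ↦ m x a y`. -/
noncomputable def phiHat (m : M) (a : A) : A ⊗[K] A →ₗ[K] M :=
  TensorProduct.lift (LinearMap.mk₂ K (fun x y => op (x * a * y) • m)
    (fun x₁ x₂ y => by simp only [add_mul, op_add, add_smul])
    (fun k x y => by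
      simp only [smul_mul_assoc, op_smul, smul_assoc])
    (fun x y₁ y₂ => by simp only [mul_add, op_add, add_smul])
    (fun k x y => by
      simp only [mul_smul_comm, op_smul, smul_assoc]))

lemma phiHat_lTensor_mulRight (m : M) (a b : A) (x : A ⊗[K] A) :
    phiHat K A M m a (LinearMap.lTensor A (LinearMap.mulRight K b) x)
      = op b • phiHat K A M m a x := by
  induction x using TensorProduct.induction_on with
  | zero => simp
  | tmul x y =>
      simp only [LinearMap.lTensor_tmul, LinearMap.mulRight_apply, phiHat,
        TensorProduct.lift.tmul, LinearMap.mk₂_apply]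
      simp only [smul_smul, ← op_mul, mul_assoc]
  | add u v hu hv => simp [hu, hv, smul_add]

/-- The element `φ_{m,a} ∈ Hom_A(Ω¹A, M)`, `Σ aᵢ ⊗ bᵢ ↦ Σ m aᵢ a bᵢ`. -/
noncomputable def phi (m : M) (a : A) : rHom K A M :=
  ⟨(phiHat K A M m a).comp (Omega1 K A).subtype, by
    intro b ω
    show phiHat K A M m a ((omegaR K A b ω) : A ⊗[K] A) = op b • phiHat K A M m a ω.1
    have : ((omegaR K A b ω) : A ⊗[K] A)
        = LinearMap.lTensor A (LinearMap.mulRight K b) ω.1 := rfl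
    rw [this, phiHat_lTensor_mulRight]⟩

/-- Multiplication of the first two factors, `A ⊗ A ⊗ A → A ⊗ A`. -/
noncomputable def mu12 : A ⊗[K] (A ⊗[K] A) →ₗ[K] A ⊗[K] A :=
  (LinearMap.rTensor A (LinearMap.mul' K A)).comp
    (TensorProduct.assoc K A A A).symm.toLinearMap

/-- Multiplication of the last two factors, `A ⊗ A ⊗ A → A ⊗ A`. -/
noncomputable def mu23 : A ⊗[K] (A ⊗[K] A) →ₗ[K] A ⊗[K] A :=
  LinearMap.lTensor A (LinearMap.mul' K A)

/-- The space `Ω²A` of universal two-forms. -/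
noncomputable def Omega2 : Submodule K (A ⊗[K] (A ⊗[K] A)) :=
  LinearMap.ker (mu12 K A) ⊓ LinearMap.ker (mu23 K A)

/-- The concatenation product `(A⊗A) ⊗ (A⊗A) → A⊗A⊗A`,
`(x⊗y) ⊗ (u⊗v) ↦ x ⊗ (y u) ⊗ v`. -/
noncomputable def concatMap : (A ⊗[K] A) ⊗[K] (A ⊗[K] A) →ₗ[K] A ⊗[K] (A ⊗[K] A) :=
  (LinearMap.lTensor A ((LinearMap.rTensor A (LinearMap.mul' K A)).comp
      (TensorProduct.assoc K A A A).symm.toLinearMap)).comp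
    (TensorProduct.assoc K A A (A ⊗[K] A)).toLinearMap

lemma mu12_comp_concatMap :
    (mu12 K A).comp (concatMap K A)
      = (mu12 K A).comp (LinearMap.rTensor (A ⊗[K] A) (LinearMap.mul' K A)) := by
  apply TensorProduct.ext_fourfold'
  intro w x y z
  simp [mu12, concatMap, mul_assoc]

lemma mu23_comp_concatMap :
    (mu23 K A).comp (concatMap K A)
      = ((LinearMap.lTensor A (LinearMap.mul' K A)).comp
          (TensorProduct.assoc K A A A).toLinearMap).comp
        (LinearMap.lTensor (A ⊗[K] A) (LinearMap.mul' K A)) := by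
  apply TensorProduct.ext_fourfold'
  intro w x y z
  simp [mu23, concatMap, mul_assoc]

/-- Concatenation of two universal one-forms is a universal two-form. -/
noncomputable def concatOmega (ω ω' : Omega1 K A) : Omega2 K A :=
  ⟨concatMap K A (ω.1 ⊗ₜ[K] ω'.1), by
    have hω : LinearMap.mul' K A ω.1 = 0 := ω.2
    have hω' : LinearMap.mul' K A ω'.1 = 0 := ω'.2
    constructor
    · show mu12 K A (concatMap K A (ω.1 ⊗ₜ[K] ω'.1)) = 0
      have := DFunLike.congr_fun (mu12_comp_concatMap K A) (ω.1 ⊗ₜ[K] ω'.1)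
      simp only [LinearMap.comp_apply, LinearMap.rTensor_tmul] at this
      rw [this, hω, TensorProduct.zero_tmul, map_zero]
    · show mu23 K A (concatMap K A (ω.1 ⊗ₜ[K] ω'.1)) = 0
      have := DFunLike.congr_fun (mu23_comp_concatMap K A) (ω.1 ⊗ₜ[K] ω'.1)
      simp only [LinearMap.comp_apply, LinearMap.lTensor_tmul] at this
      rw [this, hω', TensorProduct.tmul_zero, map_zero, map_zero]⟩

/-- The universal differential on one-forms:
`x ⊗ y ↦ 1⊗x⊗y − x⊗1⊗y + x⊗y⊗1`. -/
noncomputable def dFull : A ⊗[K] A →ₗ[K] A ⊗[K] (A ⊗[K] A) :=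
  TensorProduct.lift (LinearMap.mk₂ K
    (fun x y => (1 : A) ⊗ₜ[K] (x ⊗ₜ[K] y) - x ⊗ₜ[K] ((1 : A) ⊗ₜ[K] y)
      + x ⊗ₜ[K] (y ⊗ₜ[K] (1 : A)))
    (fun x₁ x₂ y => by
      simp only [TensorProduct.add_tmul, TensorProduct.tmul_add]
      abel)
    (fun k x y => by
      simp only [← TensorProduct.smul_tmul', TensorProduct.tmul_smul, smul_sub, smul_add])
    (fun x y₁ y₂ => by
      simp only [TensorProduct.add_tmul, TensorProduct.tmul_add]
      abel)
    (fun k x y => by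
      simp only [← TensorProduct.smul_tmul', TensorProduct.tmul_smul, smul_sub, smul_add]))

lemma mu12_comp_dFull :
    (mu12 K A).comp (dFull K A)
      = ((TensorProduct.mk K A A).flip 1).comp (LinearMap.mul' K A) := by
  apply TensorProduct.ext'
  intro x y
  simp [mu12, dFull]

lemma mu23_comp_dFull :
    (mu23 K A).comp (dFull K A)
      = (TensorProduct.mk K A A 1).comp (LinearMap.mul' K A) := by
  apply TensorProduct.ext'
  intro x y
  simp [mu23, dFull]

/-- The universal differential `d : Ω¹A → Ω²A`. -/
noncomputable def dOmega (ω : Omega1 K A) : Omega2 K A :=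
  ⟨dFull K A ω.1, by
    have hω : LinearMap.mul' K A ω.1 = 0 := ω.2
    constructor
    · show mu12 K A (dFull K A ω.1) = 0
      have := DFunLike.congr_fun (mu12_comp_dFull K A) ω.1
      simp only [LinearMap.comp_apply] at this
      rw [this, hω, map_zero]
    · show mu23 K A (dFull K A ω.1) = 0
      have := DFunLike.congr_fun (mu23_comp_dFull K A) ω.1
      simp only [LinearMap.comp_apply] at this
      rw [this, hω, map_zero]⟩

lemma mu12_lTensor_lTensor (b : A) (t : A ⊗[K] (A ⊗[K] A)) :
    mu12 K A (LinearMap.lTensor A (LinearMap.lTensor A (LinearMap.mulRight K b)) t)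
      = LinearMap.lTensor A (LinearMap.mulRight K b) (mu12 K A t) := by
  induction t using TensorProduct.induction_on with
  | zero => simp
  | tmul x w =>
      induction w using TensorProduct.induction_on with
      | zero => simp
      | tmul y z => simp [mu12]
      | add w₁ w₂ h₁ h₂ => simp_all [TensorProduct.tmul_add]
  | add t₁ t₂ h₁ h₂ => simp_all

lemma mu23_lTensor_lTensor (b : A) (t : A ⊗[K] (A ⊗[K] A)) :
    mu23 K A (LinearMap.lTensor A (LinearMap.lTensor A (LinearMap.mulRight K b)) t)
      = LinearMap.lTensor A (LinearMap.mulRight K b) (mu23 K A t) := by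
  induction t using TensorProduct.induction_on with
  | zero => simp
  | tmul x w =>
      induction w using TensorProduct.induction_on with
      | zero => simp
      | tmul y z => simp [mu23, mul_assoc]
      | add w₁ w₂ h₁ h₂ => simp_all [TensorProduct.tmul_add]
  | add t₁ t₂ h₁ h₂ => simp_all

/-- Right `A`-action on `Ω²A`: multiplication of the last tensor factor. -/
noncomputable def omega2R (b : A) : Omega2 K A →ₗ[K] Omega2 K A :=
  (LinearMap.lTensor A (LinearMap.lTensor A (LinearMap.mulRight K b))).restrict
    (fun t ht => by
      obtain ⟨h₁, h₂⟩ := ht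
      constructor
      · show mu12 K A _ = 0
        rw [mu12_lTensor_lTensor]
        rw [show mu12 K A t = 0 from h₁, map_zero]
      · show mu23 K A _ = 0
        rw [mu23_lTensor_lTensor]
        rw [show mu23 K A t = 0 from h₂, map_zero])

/-- The space `Hom_A(Ω²A, M)` of right `A`-linear maps `Ω²A → M`. -/
noncomputable def rHom2 : Submodule K (↥(Omega2 K A) →ₗ[K] M) where
  carrier := {g | ∀ (b : A) (w : Omega2 K A), g (omega2R K A b w) = op b • g w}
  add_mem' := by intro f g hf hg b w; simp [hf b w, hg b w, smul_add]
  zero_mem' := by intro b w; simp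
  smul_mem' := by
    intro c g hg b w
    simp only [LinearMap.smul_apply, hg b w]
    rw [smul_comm]

/-- The map `A ⊗ A ⊗ A → M`, `x ⊗ y ⊗ z ↦ m x a y b z`. -/
noncomputable def phi2Hat (m : M) (a b : A) : A ⊗[K] (A ⊗[K] A) →ₗ[K] M :=
  (phiHat K A M m a).comp (LinearMap.lTensor A
    ((LinearMap.mul' K A).comp (LinearMap.lTensor A (LinearMap.mulLeft K b))))

lemma phi2Hat_lTensor_mulRight (m : M) (a b c : A) (t : A ⊗[K] (A ⊗[K] A)) :
    phi2Hat K A M m a b (LinearMap.lTensor A (LinearMap.lTensor A (LinearMap.mulRight K c)) t)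
      = op c • phi2Hat K A M m a b t := by
  induction t using TensorProduct.induction_on with
  | zero => simp
  | tmul x w =>
      induction w using TensorProduct.induction_on with
      | zero => simp
      | tmul y z =>
          simp only [phi2Hat, phiHat, LinearMap.comp_apply, LinearMap.lTensor_tmul,
            LinearMap.mulRight_apply, LinearMap.mulLeft_apply, LinearMap.mul'_apply,
            TensorProduct.lift.tmul, LinearMap.mk₂_apply]
          simp only [smul_smul, ← op_mul, mul_assoc]
      | add w₁ w₂ h₁ h₂ => simp_all [TensorProduct.tmul_add, smul_add]
  | add t₁ t₂ h₁ h₂ => simp_all [smul_add]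

/-- The element `φ_{m,a,b} ∈ Hom_A(Ω²A, M)`, `Σ aᵢ⊗bᵢ⊗cᵢ ↦ Σ m aᵢ a bᵢ b cᵢ`. -/
noncomputable def phi2 (m : M) (a b : A) : rHom2 K A M :=
  ⟨(phi2Hat K A M m a b).comp (Omega2 K A).subtype, by
    intro c w
    show phi2Hat K A M m a b ((omega2R K A c w) : A ⊗[K] (A ⊗[K] A))
      = op c • phi2Hat K A M m a b w.1
    have : ((omega2R K A c w) : A ⊗[K] (A ⊗[K] A))
        = LinearMap.lTensor A (LinearMap.lTensor A (LinearMap.mulRight K c)) w.1 := rfl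
    rw [this, phi2Hat_lTensor_mulRight]⟩

lemma concatMap_lTensor_mulRight (c : A) (v w : A ⊗[K] A) :
    concatMap K A (v ⊗ₜ[K] (LinearMap.lTensor A (LinearMap.mulRight K c) w))
      = LinearMap.lTensor A (LinearMap.lTensor A (LinearMap.mulRight K c))
          (concatMap K A (v ⊗ₜ[K] w)) := by
  induction v using TensorProduct.induction_on with
  | zero => simp
  | tmul x y =>
      induction w using TensorProduct.induction_on with
      | zero => simp
      | tmul u z => simp [concatMap]
      | add w₁ w₂ h₁ h₂ => simp_all [TensorProduct.tmul_add]
  | add v₁ v₂ h₁ h₂ => simp_all [TensorProduct.add_tmul]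

lemma concatOmega_omegaR (c : A) (ω ω' : Omega1 K A) :
    concatOmega K A ω (omegaR K A c ω') = omega2R K A c (concatOmega K A ω ω') := by
  apply Subtype.ext
  show concatMap K A (ω.1 ⊗ₜ[K] (LinearMap.lTensor A (LinearMap.mulRight K c) ω'.1))
    = LinearMap.lTensor A (LinearMap.lTensor A (LinearMap.mulRight K c))
        (concatMap K A (ω.1 ⊗ₜ[K] ω'.1))
  exact concatMap_lTensor_mulRight K A c ω.1 ω'.1

/-- The action of a one-form on `g ∈ Hom_A(Ω²A, M)`: `(g·ω)(ω') := g(ω ω')`. -/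
noncomputable def gDot (g : rHom2 K A M) (ω : Omega1 K A) : rHom K A M :=
  ⟨{ toFun := fun ω' => (g : ↥(Omega2 K A) →ₗ[K] M) (concatOmega K A ω ω')
     map_add' := by
       intro ω' ω''
       show (g : ↥(Omega2 K A) →ₗ[K] M) (concatOmega K A ω (ω' + ω''))
         = (g : ↥(Omega2 K A) →ₗ[K] M) (concatOmega K A ω ω')
           + (g : ↥(Omega2 K A) →ₗ[K] M) (concatOmega K A ω ω'')
       have : concatOmega K A ω (ω' + ω'')
           = concatOmega K A ω ω' + concatOmega K A ω ω'' := by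
         apply Subtype.ext
         show concatMap K A (ω.1 ⊗ₜ[K] (ω'.1 + ω''.1)) = _
         rw [TensorProduct.tmul_add, map_add]
         rfl
       rw [this, map_add]
     map_smul' := by
       intro k ω'
       show (g : ↥(Omega2 K A) →ₗ[K] M) (concatOmega K A ω (k • ω'))
         = k • (g : ↥(Omega2 K A) →ₗ[K] M) (concatOmega K A ω ω')
       have : concatOmega K A ω (k • ω') = k • concatOmega K A ω ω' := by
         apply Subtype.ext
         show concatMap K A (ω.1 ⊗ₜ[K] (k • ω'.1)) = _
         rw [TensorProduct.tmul_smul, map_smul]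
         rfl
       rw [this, map_smul] }, by
    intro c ω'
    show (g : ↥(Omega2 K A) →ₗ[K] M) (concatOmega K A ω (omegaR K A c ω'))
      = op c • (g : ↥(Omega2 K A) →ₗ[K] M) (concatOmega K A ω ω')
    rw [concatOmega_omegaR]
    exact g.2 c (concatOmega K A ω ω')⟩

lemma gDot_add (g : rHom2 K A M) (ω₁ ω₂ : Omega1 K A) :
    gDot K A M g (ω₁ + ω₂) = gDot K A M g ω₁ + gDot K A M g ω₂ := by
  apply Subtype.ext
  apply LinearMap.ext
  intro ω'
  show (g : ↥(Omega2 K A) →ₗ[K] M) (concatOmega K A (ω₁ + ω₂) ω')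
    = (g : ↥(Omega2 K A) →ₗ[K] M) (concatOmega K A ω₁ ω')
      + (g : ↥(Omega2 K A) →ₗ[K] M) (concatOmega K A ω₂ ω')
  have : concatOmega K A (ω₁ + ω₂) ω' = concatOmega K A ω₁ ω' + concatOmega K A ω₂ ω' := by
    apply Subtype.ext
    show concatMap K A ((ω₁.1 + ω₂.1) ⊗ₜ[K] ω'.1) = _
    rw [TensorProduct.add_tmul, map_add]
    rfl
  rw [this, map_add]

lemma gDot_smul (g : rHom2 K A M) (k : K) (ω : Omega1 K A) :
    gDot K A M g (k • ω) = k • gDot K A M g ω := by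
  apply Subtype.ext
  apply LinearMap.ext
  intro ω'
  show (g : ↥(Omega2 K A) →ₗ[K] M) (concatOmega K A (k • ω) ω')
    = k • (g : ↥(Omega2 K A) →ₗ[K] M) (concatOmega K A ω ω')
  have : concatOmega K A (k • ω) ω' = k • concatOmega K A ω ω' := by
    apply Subtype.ext
    show concatMap K A ((k • ω.1) ⊗ₜ[K] ω'.1) = _
    rw [← TensorProduct.smul_tmul', map_smul]
    rfl
  rw [this, map_smul]

lemma dOmega_add (ω₁ ω₂ : Omega1 K A) :
    dOmega K A (ω₁ + ω₂) = dOmega K A ω₁ + dOmega K A ω₂ := by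
  apply Subtype.ext
  show dFull K A (ω₁.1 + ω₂.1) = _
  rw [map_add]
  rfl

lemma dOmega_smul (k : K) (ω : Omega1 K A) :
    dOmega K A (k • ω) = k • dOmega K A ω := by
  apply Subtype.ext
  show dFull K A (k • ω.1) = _
  rw [map_smul]
  rfl

lemma concat_omegaR_omegaL (a : A) (v w : A ⊗[K] A) :
    concatMap K A ((LinearMap.lTensor A (LinearMap.mulRight K a) v) ⊗ₜ[K] w)
      = concatMap K A (v ⊗ₜ[K] (LinearMap.rTensor A (LinearMap.mulLeft K a) w)) := by
  induction v using TensorProduct.induction_on with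
  | zero => simp
  | tmul x y =>
      induction w using TensorProduct.induction_on with
      | zero => simp
      | tmul u z => simp [concatMap, mul_assoc]
      | add w₁ w₂ h₁ h₂ => simp_all [TensorProduct.tmul_add]
  | add v₁ v₂ h₁ h₂ => simp_all [TensorProduct.add_tmul]

set_option synthInstance.maxHeartbeats 1000000 in
set_option maxHeartbeats 1000000 in
lemma dFull_lTensor_mulRight (a : A) (v : A ⊗[K] A) :
    dFull K A (LinearMap.lTensor A (LinearMap.mulRight K a) v)
      = LinearMap.lTensor A (LinearMap.lTensor A (LinearMap.mulRight K a)) (dFull K A v)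
        - concatMap K A (v ⊗ₜ[K] ((1 : A) ⊗ₜ[K] a - a ⊗ₜ[K] (1 : A))) := by
  induction v using TensorProduct.induction_on with
  | zero => simp
  | tmul x y =>
      simp [dFull, concatMap, TensorProduct.tmul_sub, mul_one, one_mul]
      abel
  | add v₁ v₂ h₁ h₂ =>
      simp only [map_add, TensorProduct.add_tmul] at *
      rw [h₁, h₂]; abel

lemma gDot_omegaR (g : rHom2 K A M) (a : A) (ω : Omega1 K A) :
    gDot K A M g (omegaR K A a ω) = fDot K A M (gDot K A M g ω) a := by
  apply Subtype.ext
  apply LinearMap.ext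
  intro ω'
  show (g : ↥(Omega2 K A) →ₗ[K] M) (concatOmega K A (omegaR K A a ω) ω')
    = (g : ↥(Omega2 K A) →ₗ[K] M) (concatOmega K A ω (omegaL K A a ω'))
  congr 1
  apply Subtype.ext
  exact concat_omegaR_omegaL K A a ω.1 ω'.1

lemma omega2R_dOmega (a : A) (ω : Omega1 K A) :
    omega2R K A a (dOmega K A ω)
      = dOmega K A (omegaR K A a ω) + concatOmega K A ω (dEl K A a) := by
  apply Subtype.ext
  show LinearMap.lTensor A (LinearMap.lTensor A (LinearMap.mulRight K a)) (dFull K A ω.1)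
    = dFull K A (LinearMap.lTensor A (LinearMap.mulRight K a) ω.1)
      + concatMap K A (ω.1 ⊗ₜ[K] ((1 : A) ⊗ₜ[K] a - a ⊗ₜ[K] (1 : A)))
  rw [dFull_lTensor_mulRight K A a ω.1]
  abel

/-- Given a hom-connection `D`, the map
`∇₁ : Hom_A(Ω²A, M) → Hom_A(Ω¹A, M)`, `∇₁(g)(ω) := D(g·ω) + g(dω)`. -/
noncomputable def nabla1Hom (D : ↥(rHom K A M) →ₗ[K] M) (hD : IsHomConnection K A M D)
    (g : rHom2 K A M) : rHom K A M :=
  ⟨{ toFun := fun ω => D (gDot K A M g ω) + (g : ↥(Omega2 K A) →ₗ[K] M) (dOmega K A ω)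
     map_add' := by
       intro ω ω'
       simp only [gDot_add, dOmega_add, map_add]
       abel
     map_smul' := by
       intro k ω
       simp only [gDot_smul, dOmega_smul, map_smul, RingHom.id_apply, smul_add] },
    by
    -- Right `A`-linearity of `∇₁(g)`, a consequence of the hom-connection property.
    intro a ω
    show D (gDot K A M g (omegaR K A a ω))
        + (g : ↥(Omega2 K A) →ₗ[K] M) (dOmega K A (omegaR K A a ω))
      = op a • (D (gDot K A M g ω) + (g : ↥(Omega2 K A) →ₗ[K] M) (dOmega K A ω))
    have h2 : (g : ↥(Omega2 K A) →ₗ[K] M) (dOmega K A (omegaR K A a ω))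
        = op a • (g : ↥(Omega2 K A) →ₗ[K] M) (dOmega K A ω)
          - (g : ↥(Omega2 K A) →ₗ[K] M) (concatOmega K A ω (dEl K A a)) := by
      have hg := g.2 a (dOmega K A ω)
      rw [omega2R_dOmega, map_add] at hg
      exact (eq_sub_of_add_eq hg)
    rw [gDot_omegaR, hD (gDot K A M g ω) a, h2]
    have h : ((gDot K A M g ω : rHom K A M) : ↥(Omega1 K A) →ₗ[K] M) (dEl K A a)
        = (g : ↥(Omega2 K A) →ₗ[K] M) (concatOmega K A ω (dEl K A a)) := rfl
    rw [h, smul_add]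
    abel⟩

/-- A hom-connection `D` is flat if `D ∘ ∇₁ = 0`. -/
def IsFlatHomConnection (D : ↥(rHom K A M) →ₗ[K] M) (hD : IsHomConnection K A M D) : Prop :=
  ∀ g : rHom2 K A M, D (nabla1Hom K A M D hD g) = 0

/-- The induced left action of a flat hom-connection: `a·m := m a + D(φ_{m,a})`. -/
noncomputable def lact (D : ↥(rHom K A M) →ₗ[K] M) (a : A) (m : M) : M :=
  op a • m + D (phi K A M m a)

lemma phiHat_tmul (m : M) (a x y : A) :
    phiHat K A M m a (x ⊗ₜ[K] y) = op (x * a * y) • m := rfl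

lemma phiHat_add_left (n n' : M) (a : A) :
    phiHat K A M (n + n') a = phiHat K A M n a + phiHat K A M n' a :=
  TensorProduct.ext' fun x y => by simp only [LinearMap.add_apply, phiHat_tmul, smul_add]

lemma phiHat_zero_left (a : A) : phiHat K A M 0 a = 0 :=
  TensorProduct.ext' fun x y => by simp only [LinearMap.zero_apply, phiHat_tmul, smul_zero]

lemma phi_add_left (n n' : M) (a : A) :
    phi K A M (n + n') a = phi K A M n a + phi K A M n' a := by
  ext ω
  exact DFunLike.congr_fun (phiHat_add_left K A M n n' a) ω.1

lemma phi_zero_left (a : A) : phi K A M 0 a = 0 := by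
  ext ω
  exact DFunLike.congr_fun (phiHat_zero_left K A M a) ω.1

lemma phiHat_rTensor_mulLeft (m : M) (a c : A) (v : A ⊗[K] A) :
    phiHat K A M m a (LinearMap.rTensor A (LinearMap.mulLeft K c) v)
      = phiHat K A M (op c • m) a v := by
  induction v using TensorProduct.induction_on with
  | zero => simp only [map_zero]
  | tmul x y =>
      simp only [LinearMap.rTensor_tmul, LinearMap.mulLeft_apply, phiHat_tmul, smul_smul,
        ← op_mul, mul_assoc]
  | add u v hu hv => simp only [map_add, hu, hv]

lemma phi_op_smul (m : M) (b c : A) :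
    phi K A M (op c • m) b = fDot K A M (phi K A M m b) c := by
  ext ω
  exact (phiHat_rTensor_mulLeft K A M m b c ω.1).symm

lemma phi_apply_dEl (m : M) (b c : A) :
    ((phi K A M m b : rHom K A M) : ↥(Omega1 K A) →ₗ[K] M) (dEl K A c)
      = op (b * c) • m - op (c * b) • m := by
  change phiHat K A M m b ((1 : A) ⊗ₜ[K] c - c ⊗ₜ[K] (1 : A)) = _
  rw [map_sub, phiHat_tmul, phiHat_tmul, one_mul, mul_one]

lemma hom_connection_phi_op_smul {D : ↥(rHom K A M) →ₗ[K] M} (hD : IsHomConnection K A M D)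
    (m : M) (b c : A) :
    D (phi K A M (op c • m) b) = op c • D (phi K A M m b) + op (b * c) • m - op (c * b) • m := by
  rw [phi_op_smul, hD, phi_apply_dEl, add_sub_assoc]

lemma hom_connection_phi_phiHat {D : ↥(rHom K A M) →ₗ[K] M} (hD : IsHomConnection K A M D)
    (m : M) (a b : A) (v : A ⊗[K] A) :
    D (phi K A M (phiHat K A M m a v) b)
      = phiHat K A M (D (phi K A M m b)) a v + phiHat K A M (op b • m) a v
        - op b • phiHat K A M m a v := by
  induction v using TensorProduct.induction_on with
  | zero => simp only [map_zero, phi_zero_left, sub_zero, add_zero, smul_zero]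
  | tmul x y =>
      rw [phiHat_tmul, hom_connection_phi_op_smul K A M hD]
      simp only [phiHat_tmul, smul_smul, ← op_mul, mul_assoc]
  | add u v hu hv =>
      rw [map_add (phiHat K A M m a), phi_add_left, map_add D, hu, hv]
      simp only [map_add, smul_add]
      abel

lemma phi2Hat_concatMap (m : M) (a b : A) (v w : A ⊗[K] A) :
    phi2Hat K A M m a b (concatMap K A (v ⊗ₜ[K] w))
      = phiHat K A M (phiHat K A M m a v) b w := by
  induction v using TensorProduct.induction_on with
  | zero => simp only [TensorProduct.zero_tmul, map_zero, phiHat_zero_left, LinearMap.zero_apply]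
  | tmul x y =>
      induction w using TensorProduct.induction_on with
      | zero => simp only [TensorProduct.tmul_zero, map_zero]
      | tmul u z =>
          simp only [concatMap, phi2Hat, LinearMap.comp_apply, LinearEquiv.coe_coe,
            TensorProduct.assoc_tmul, LinearMap.lTensor_tmul, TensorProduct.assoc_symm_tmul,
            LinearMap.rTensor_tmul, LinearMap.mul'_apply, LinearMap.mulLeft_apply,
            phiHat_tmul, smul_smul, ← op_mul, mul_assoc]
      | add w₁ w₂ h₁ h₂ => simp only [TensorProduct.tmul_add, map_add, h₁, h₂]
  | add v₁ v₂ h₁ h₂ =>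
      rw [TensorProduct.add_tmul, map_add, map_add, h₁, h₂, map_add (phiHat K A M m a), phiHat_add_left,
        LinearMap.add_apply]

lemma gDot_phi2 (m : M) (a b : A) (ω : Omega1 K A) :
    gDot K A M (phi2 K A M m a b) ω = phi K A M (phiHat K A M m a ω.1) b := by
  ext ω'
  exact phi2Hat_concatMap K A M m a b ω.1 ω'.1

lemma phi2Hat_dFull (m : M) (a b : A) (v : A ⊗[K] A) :
    phi2Hat K A M m a b (dFull K A v)
      = phiHat K A M (op a • m) b v - phiHat K A M m (a * b) v
        + op b • phiHat K A M m a v := by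
  induction v using TensorProduct.induction_on with
  | zero => simp only [map_zero, sub_zero, add_zero, smul_zero]
  | tmul x y =>
      simp only [dFull, TensorProduct.lift.tmul, LinearMap.mk₂_apply, map_sub, map_add,
        phi2Hat, LinearMap.comp_apply, LinearMap.lTensor_tmul, LinearMap.mulLeft_apply,
        LinearMap.mul'_apply, phiHat_tmul, smul_smul, ← op_mul, mul_assoc, one_mul, mul_one]
  | add u v hu hv =>
      simp only [map_add, hu, hv, smul_add]
      abel

/-- For a hom-connection `D` on a right `A`-module `M` with respect to
the universal differential calculus, the following equality of right `A`-linear maps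
`Ω¹A → M` holds: `∇₁(φ_{m,a,b}) = φ_{D(φ_{m,b}), a} + φ_{m b, a} + φ_{m a, b} − φ_{m, a b}`. -/
theorem nabla1_phi2_identity (D : ↥(rHom K A M) →ₗ[K] M)
    (hD : IsHomConnection K A M D) (a b : A) (m : M) :
    nabla1Hom K A M D hD (phi2 K A M m a b)
      = phi K A M (D (phi K A M m b)) a + phi K A M (op b • m) a
        + phi K A M (op a • m) b - phi K A M m (a * b) := by
  ext ω
  change D (gDot K A M (phi2 K A M m a b) ω) + phi2Hat K A M m a b (dFull K A ω.1)
    = phiHat K A M (D (phi K A M m b)) a ω.1 + phiHat K A M (op b • m) a ω.1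
      + phiHat K A M (op a • m) b ω.1 - phiHat K A M m (a * b) ω.1
  rw [gDot_phi2, hom_connection_phi_phiHat K A M hD, phi2Hat_dFull]
  abel
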